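/- Let (Xᵢ, Yᵢ, Rᵢ)_{i≥1} be i.i.d. copies of (X, Y, R), with Y taking values in a finite label set C and R in {0,1}, satisfying: R is conditionally independent of X given Y, and E[R | Y] = φ(Y) almost surely where φ : C → ℝ with c ≤ φ(k) ≤ 1 for some c > 0 and all k. Let ℓ_ℓ and ℓ_u be bounded measurable losses, |ℓ_ℓ(X,Y)| ≤ L and |ℓ_u(X)| ≤ L, and λ ∈ ℝ. Let (φ̂ⁿ)_{n≥1} be any sequence of C-indexed random vectors with φ̂ⁿ(k) → φ(k) in probability for every k ∈ C and φ̂ⁿ(k) ≥ c for all k, n. Then the plug-in debiased SSL empirical risk (1/n) Σ_{i=1}^n [ Rᵢ ℓ_ℓ(Xᵢ, Yᵢ) / φ̂ⁿ(Yᵢ) − λ (Rᵢ − φ̂ⁿ(Yᵢ)) ℓ_u(Xᵢ) / φ̂ⁿ(Yᵢ) ] converges in probability to the theoretical risk E[ℓ_ℓ(X,Y)] as n → ∞. -/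

import Mathlib

/-!
With the true mechanism `φ` in place of `φ̂ⁿ`, the estimator is an average of i.i.d. bounded
summands, so by the strong law it converges to their mean. That mean is the risk: on each fibre
`{Y = k}`, conditional independence makes `R` independent of `X`, so
`E[R g(X); Y = k] = φ(k) E[g(X); Y = k]`, which cancels the weight `1 / φ(Y)` and the `λ`-term.
Since all weights are at least `c`, plug-in and oracle summands differ by at most a constant
times `max_k |φ̂ⁿ(k) - φ(k)|`, which tends to `0` in probability.
-/

open MeasureTheory ProbabilityTheory Filter

namespace MeasureTheory

variable {Ω ι E : Type*} [MeasurableSpace Ω] {μ : Measure Ω} {l : Filter ι}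

theorem TendstoInMeasure.add [SeminormedAddCommGroup E] {f g : ι → Ω → E} {F G : Ω → E}
    (hf : TendstoInMeasure μ f l F) (hg : TendstoInMeasure μ g l G) :
    TendstoInMeasure μ (fun n ω => f n ω + g n ω) l (fun ω => F ω + G ω) := by
  rw [tendstoInMeasure_iff_norm] at *
  intro ε hε
  have hsub : ∀ n, {ω | ε ≤ ‖f n ω + g n ω - (F ω + G ω)‖} ⊆
      {ω | ε / 2 ≤ ‖f n ω - F ω‖} ∪ {ω | ε / 2 ≤ ‖g n ω - G ω‖} := by
    intro n ω hω
    by_contra! h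
    simp only [Set.mem_union, Set.mem_ofPred_eq, not_or, not_le] at h hω
    have htri := norm_add_le (f n ω - F ω) (g n ω - G ω)
    rw [add_sub_add_comm] at hω
    linarith
  refine tendsto_of_tendsto_of_tendsto_of_le_of_le tendsto_const_nhds ?_ (fun _ => zero_le)
    fun n => (measure_mono (hsub n)).trans (measure_union_le _ _)
  simpa using (hf _ (half_pos hε)).add (hg _ (half_pos hε))

theorem tendstoInMeasure_pi {κ : Type*} [Fintype κ] {E : κ → Type*}
    [∀ k, PseudoMetricSpace (E k)] {f : ι → Ω → ∀ k, E k} {g : Ω → ∀ k, E k}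
    (h : ∀ k, TendstoInMeasure μ (fun n ω => f n ω k) l (fun ω => g ω k)) :
    TendstoInMeasure μ f l g := by
  simp only [tendstoInMeasure_iff_dist] at *
  intro ε hε
  have hsub : ∀ n, {ω | ε ≤ dist (f n ω) (g ω)} ⊆ ⋃ k, {ω | ε ≤ dist (f n ω k) (g ω k)} := by
    intro n ω hω
    by_contra! hlt
    simp only [Set.mem_iUnion, Set.mem_ofPred_eq, not_exists, not_le] at hlt hω
    exact hω.not_gt ((dist_pi_lt_iff hε).2 hlt)
  refine tendsto_of_tendsto_of_tendsto_of_le_of_le tendsto_const_nhds ?_ (fun _ => zero_le)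
    fun n => (measure_mono (hsub n)).trans (measure_iUnion_fintype_le _ _)
  simpa using tendsto_finsetSum Finset.univ fun k _ => h k ε hε

theorem TendstoInMeasure.of_dist_le_mul {F : Type*} [PseudoMetricSpace E] [PseudoMetricSpace F]
    {f : ι → Ω → E} {g : Ω → E} {u : ι → Ω → F} {v : Ω → F} (K : ℝ)
    (hu : TendstoInMeasure μ u l v) (hle : ∀ n ω, dist (f n ω) (g ω) ≤ K * dist (u n ω) (v ω)) :
    TendstoInMeasure μ f l g := by
  rw [tendstoInMeasure_iff_dist] at *
  intro ε hε
  have hδ : 0 < ε / (|K| + 1) := by positivity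
  have hsub : ∀ n, {ω | ε ≤ dist (f n ω) (g ω)} ⊆ {ω | ε / (|K| + 1) ≤ dist (u n ω) (v ω)} := by
    intro n ω hω
    by_contra! h
    simp only [Set.mem_ofPred_eq, not_le] at h hω
    have hK : K * dist (u n ω) (v ω) ≤ |K| * (ε / (|K| + 1)) :=
      (mul_le_mul_of_nonneg_right (le_abs_self K) dist_nonneg).trans
        (mul_le_mul_of_nonneg_left h.le (abs_nonneg K))
    have hsmall : |K| * (ε / (|K| + 1)) < ε := by
      rw [mul_div_assoc', div_lt_iff₀ (by positivity)]; nlinarith [abs_nonneg K]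
    linarith [hle n ω]
  exact tendsto_of_tendsto_of_tendsto_of_le_of_le tendsto_const_nhds (hu _ hδ) (fun _ => zero_le)
    fun n => measure_mono (hsub n)

end MeasureTheory

namespace ProbabilityTheory

theorem integral_cond {Ω : Type*} [MeasurableSpace Ω] (μ : Measure Ω) (s : Set Ω)
    (f : Ω → ℝ) : ∫ x, f x ∂μ[|s] = (μ.real s)⁻¹ * ∫ x in s, f x ∂μ := by
  rw [cond, integral_smul_measure, ENNReal.toReal_inv, smul_eq_mul, measureReal_def]

section Fibers

variable {Ω C : Type*} [MeasurableSpace Ω] [MeasurableSpace C] [MeasurableSingletonClass C]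
  {μ : Measure Ω} {Y : Ω → C}

theorem integral_eq_sum_setIntegral_fiber [Fintype C] (hY : Measurable Y) {f : Ω → ℝ}
    (hf : Integrable f μ) : ∫ ω, f ω ∂μ = ∑ k, ∫ ω in Y ⁻¹' {k}, f ω ∂μ := by
  have hcover : ⋃ k, Y ⁻¹' {k} = Set.univ :=
    Set.eq_univ_of_forall fun ω => Set.mem_iUnion.2 ⟨Y ω, rfl⟩
  rw [← integral_iUnion_fintype (fun k => hY (measurableSet_singleton k))
    (fun i j hij => (Set.disjoint_singleton.2 hij).preimage Y) fun _ => hf.integrableOn,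
    hcover, setIntegral_univ]

variable [IsFiniteMeasure μ]

theorem condExp_comap_mul_measureReal_fiber (hY : Measurable Y) {f : Ω → ℝ}
    (hf : Integrable f μ) (ω : Ω) :
    (μ[f | MeasurableSpace.comap Y inferInstance]) ω * μ.real (Y ⁻¹' {Y ω})
      = ∫ x in Y ⁻¹' {Y ω}, f x ∂μ := by
  have hfib : MeasurableSet[MeasurableSpace.comap Y inferInstance] (Y ⁻¹' {Y ω}) :=
    ⟨{Y ω}, measurableSet_singleton _, rfl⟩
  rw [← setIntegral_condExp hY.comap_le hf hfib, setIntegral_congr_fun (hY.comap_le _ hfib)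
    fun _ hx => stronglyMeasurable_condExp.factorsThrough hx, setIntegral_const,
    smul_eq_mul, mul_comm]

theorem condExp_indicator_comap_mul_measureReal_fiber (hY : Measurable Y) {A : Set Ω}
    (hA : MeasurableSet A) (ω : Ω) :
    (μ⟦A | MeasurableSpace.comap Y inferInstance⟧) ω * μ.real (Y ⁻¹' {Y ω})
      = μ.real (A ∩ Y ⁻¹' {Y ω}) := by
  rw [condExp_comap_mul_measureReal_fiber hY ((integrable_const 1).indicator hA),
    integral_indicator_const _ hA, smul_eq_mul, mul_one, measureReal_restrict_apply hA]

/-- Conditional probabilities given `Y` are constant on the fibre `{Y = k}`, so there the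
conditional product rule is the unconditional one for `μ[|Y ⁻¹' {k}]`. -/
theorem CondIndepFun.indepFun_cond_fiber [StandardBorelSpace Ω] {β β' : Type*}
    [MeasurableSpace β] [MeasurableSpace β'] {f : Ω → β} {g : Ω → β'} (hY : Measurable Y)
    (hfg : CondIndepFun (MeasurableSpace.comap Y inferInstance) hY.comap_le f g μ)
    (hf : Measurable f) (hg : Measurable g) (k : C) :
    IndepFun f g μ[|Y ⁻¹' {k}] := by
  set E := Y ⁻¹' {k}
  have hE : MeasurableSet E := hY (measurableSet_singleton k)
  rw [indepFun_iff_measure_inter_preimage_eq_mul]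
  intro s t hs ht
  by_cases hμE : μ E = 0
  · simp [cond_eq_zero_of_meas_eq_zero hμE]
  have hA := hf hs
  have hB := hg ht
  obtain ⟨ω, hωE, hprod⟩ : ∃ ω ∈ E,
      (μ⟦f ⁻¹' s ∩ g ⁻¹' t | MeasurableSpace.comap Y inferInstance⟧) ω
        = (μ⟦f ⁻¹' s | MeasurableSpace.comap Y inferInstance⟧) ω
          * (μ⟦g ⁻¹' t | MeasurableSpace.comap Y inferInstance⟧) ω :=
    Measure.exists_mem_of_measure_ne_zero_of_ae hμE (ae_restrict_of_ae
      ((condIndepFun_iff_condExp_inter_preimage_eq_mul hf hg).1 hfg s t hs ht))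
  have hfib : Y ⁻¹' {Y ω} = E := by rw [show Y ω = k from hωE]
  have hAB := condExp_indicator_comap_mul_measureReal_fiber (μ := μ) hY (hA.inter hB) ω
  have hA' := condExp_indicator_comap_mul_measureReal_fiber (μ := μ) hY hA ω
  have hB' := condExp_indicator_comap_mul_measureReal_fiber (μ := μ) hY hB ω
  rw [hfib, hprod] at hAB
  rw [hfib] at hA' hB'
  have hT : μ.real E ≠ 0 := (measureReal_ne_zero_iff (measure_ne_top μ E)).2 hμE
  rw [← ENNReal.toReal_eq_toReal_iff' (measure_ne_top _ _)
    (ENNReal.mul_ne_top (measure_ne_top _ _) (measure_ne_top _ _)), ENNReal.toReal_mul]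
  simp only [← measureReal_def, cond_apply hE, ENNReal.toReal_mul, ENNReal.toReal_inv]
  rw [Set.inter_comm E, Set.inter_comm E, Set.inter_comm E, ← hAB, ← hA', ← hB']
  field_simp

theorem setIntegral_fiber_mul_eq_of_condIndepFun [StandardBorelSpace Ω] {𝒳 : Type*}
    [MeasurableSpace 𝒳] {X : Ω → 𝒳} {R : Ω → ℝ} (hY : Measurable Y) (hX : Measurable X)
    (hR : Measurable R) (hRint : Integrable R μ)
    (hRX : CondIndepFun (MeasurableSpace.comap Y inferInstance) hY.comap_le R X μ) {φ : C → ℝ}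
    (hφ : μ[R | MeasurableSpace.comap Y inferInstance] =ᵐ[μ] fun ω => φ (Y ω))
    {g : 𝒳 → ℝ} (hg : Measurable g) (k : C) :
    ∫ ω in Y ⁻¹' {k}, R ω * g (X ω) ∂μ = φ k * ∫ ω in Y ⁻¹' {k}, g (X ω) ∂μ := by
  by_cases hμE : μ (Y ⁻¹' {k}) = 0
  · simp [Measure.restrict_eq_zero.2 hμE]
  have hT : μ.real (Y ⁻¹' {k}) ≠ 0 := (measureReal_ne_zero_iff (measure_ne_top _ _)).2 hμE
  obtain ⟨ω, hωE, hω⟩ : ∃ ω ∈ Y ⁻¹' {k},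
      (μ[R | MeasurableSpace.comap Y inferInstance]) ω = φ (Y ω) :=
    Measure.exists_mem_of_measure_ne_zero_of_ae hμE (ae_restrict_of_ae hφ)
  have hRE : ∫ x in Y ⁻¹' {k}, R x ∂μ = φ k * μ.real (Y ⁻¹' {k}) := by
    have hYω : Y ω = k := hωE
    have := condExp_comap_mul_measureReal_fiber hY hRint ω
    rwa [hω, hYω, eq_comm] at this
  have hmul := ((hRX.indepFun_cond_fiber hY hR hX k).comp measurable_id hg)
    |>.integral_fun_mul_eq_mul_integral hR.aestronglyMeasurable
      (hg.comp hX).aestronglyMeasurable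
  simp only [Function.comp_apply, id, integral_cond μ, hRE] at hmul
  field_simp at hmul
  linear_combination hmul

theorem integral_mul_eq_of_condIndepFun [StandardBorelSpace Ω] [Fintype C] {𝒳 : Type*}
    [MeasurableSpace 𝒳] {X : Ω → 𝒳} {R : Ω → ℝ} (hY : Measurable Y) (hX : Measurable X)
    (hR : Measurable R) (hRint : Integrable R μ)
    (hRX : CondIndepFun (MeasurableSpace.comap Y inferInstance) hY.comap_le R X μ) {φ : C → ℝ}
    (hφ : μ[R | MeasurableSpace.comap Y inferInstance] =ᵐ[μ] fun ω => φ (Y ω))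
    {G : 𝒳 → C → ℝ} (hG : Measurable fun p : 𝒳 × C => G p.1 p.2)
    (hRG : Integrable (fun ω => R ω * G (X ω) (Y ω)) μ)
    (hφG : Integrable (fun ω => φ (Y ω) * G (X ω) (Y ω)) μ) :
    ∫ ω, R ω * G (X ω) (Y ω) ∂μ = ∫ ω, φ (Y ω) * G (X ω) (Y ω) ∂μ := by
  rw [integral_eq_sum_setIntegral_fiber hY hRG, integral_eq_sum_setIntegral_fiber hY hφG]
  refine Finset.sum_congr rfl fun k _ => ?_
  have hfiber : ∀ F : C → Ω → ℝ, ∫ ω in Y ⁻¹' {k}, F (Y ω) ω ∂μ = ∫ ω in Y ⁻¹' {k}, F k ω ∂μ :=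
    fun F => setIntegral_congr_fun (hY (measurableSet_singleton k)) fun ω hω => by
      rw [show Y ω = k from hω]
  calc ∫ ω in Y ⁻¹' {k}, R ω * G (X ω) (Y ω) ∂μ = ∫ ω in Y ⁻¹' {k}, R ω * G (X ω) k ∂μ :=
        hfiber fun y ω => R ω * G (X ω) y
    _ = φ k * ∫ ω in Y ⁻¹' {k}, G (X ω) k ∂μ :=
        setIntegral_fiber_mul_eq_of_condIndepFun hY hX hR hRint hRX hφ
          (hG.comp (measurable_id.prodMk measurable_const)) k
    _ = ∫ ω in Y ⁻¹' {k}, φ (Y ω) * G (X ω) (Y ω) ∂μ := by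
        rw [← integral_const_mul]; exact (hfiber fun y ω => φ y * G (X ω) y).symm

end Fibers

end ProbabilityTheory

theorem abs_inv_sub_inv_le_of_le {c p q : ℝ} (hc : 0 < c) (hp : c ≤ p) (hq : c ≤ q) :
    |p⁻¹ - q⁻¹| ≤ |p - q| / c ^ 2 := by
  have hp0 : 0 < p := hc.trans_le hp
  have hq0 : 0 < q := hc.trans_le hq
  rw [inv_sub_inv hp0.ne' hq0.ne', abs_div, abs_of_pos (mul_pos hp0 hq0), abs_sub_comm, sq]
  exact div_le_div_of_nonneg_left (abs_nonneg _) (mul_pos hc hc) (mul_le_mul hp hq hc.le hp0.le)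

theorem abs_sum_range_div_sub_sum_range_div_le {a b : ℕ → ℝ} {M : ℝ}
    (h : ∀ i, |a i - b i| ≤ M) (n : ℕ) :
    |(∑ i ∈ Finset.range n, a i) / n - (∑ i ∈ Finset.range n, b i) / n| ≤ M := by
  rw [← sub_div, ← Finset.sum_sub_distrib, abs_div, Nat.abs_cast]
  rcases n.eq_zero_or_pos with rfl | hn
  · simpa using (abs_nonneg _).trans (h 0)
  rw [div_le_iff₀ (by positivity)]
  calc |∑ i ∈ Finset.range n, (a i - b i)| ≤ ∑ i ∈ Finset.range n, |a i - b i| :=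
        Finset.abs_sum_le_sum_abs _ _
    _ ≤ ∑ _i ∈ Finset.range n, M := Finset.sum_le_sum fun i _ => h i
    _ = M * n := by simp [mul_comm]

theorem abs_sub_mul_le_of_abs_le {a b L : ℝ} (lam : ℝ) (ha : |a| ≤ L) (hb : |b| ≤ L) :
    |a - lam * b| ≤ (1 + |lam|) * L :=
  calc |a - lam * b| ≤ |a| + |lam| * |b| := (abs_sub _ _).trans_eq (by rw [abs_mul])
    _ ≤ L + |lam| * L := by gcongr
    _ = (1 + |lam|) * L := by ring

section DebiasedLoss

variable {𝒳 C : Type*} (ℓℓ : 𝒳 → C → ℝ) (ℓu : 𝒳 → ℝ) (lam : ℝ)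

/-- The summand of `R̂^SSL` with mechanism weights `w`: `w = φ̂ⁿ(·)(ω)` gives the plug-in
estimator and `w = φ` the oracle one. -/
noncomputable def debiasedLoss (w : C → ℝ) (x : 𝒳) (y : C) (r : ℝ) : ℝ :=
  r * ℓℓ x y / w y - lam * (r - w y) * ℓu x / w y

variable {ℓℓ ℓu lam}

theorem debiasedLoss_eq {w : C → ℝ} {x : 𝒳} {y : C} (r : ℝ) (hw : w y ≠ 0) :
    debiasedLoss ℓℓ ℓu lam w x y r = r * ((ℓℓ x y - lam * ℓu x) / w y) + lam * ℓu x := by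
  unfold debiasedLoss
  field_simp
  ring

theorem measurable_debiasedLoss [MeasurableSpace 𝒳] [MeasurableSpace C] [Finite C]
    [MeasurableSingletonClass C] (hℓℓ : Measurable fun p : 𝒳 × C => ℓℓ p.1 p.2)
    (hℓu : Measurable ℓu) (w : C → ℝ) :
    Measurable fun p : 𝒳 × C × ℝ => debiasedLoss ℓℓ ℓu lam w p.1 p.2.1 p.2.2 := by
  have hw : Measurable fun p : 𝒳 × C × ℝ => w p.2.1 :=
    (measurable_of_finite w).comp measurable_snd.fst
  have hℓℓ' : Measurable fun p : 𝒳 × C × ℝ => ℓℓ p.1 p.2.1 :=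
    hℓℓ.comp (measurable_fst.prodMk measurable_snd.fst)
  have hℓu' : Measurable fun p : 𝒳 × C × ℝ => ℓu p.1 := hℓu.comp measurable_fst
  unfold debiasedLoss
  fun_prop

variable {c L : ℝ} {x : 𝒳} {y : C} {r : ℝ}

theorem abs_debiasedLoss_le {w : C → ℝ} (hc : 0 < c) (hw : ∀ k, c ≤ w k) (hr : |r| ≤ 1)
    (hℓℓ : |ℓℓ x y| ≤ L) (hℓu : |ℓu x| ≤ L) :
    |debiasedLoss ℓℓ ℓu lam w x y r| ≤ (1 + |lam|) * L / c + |lam| * L := by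
  have hw0 : 0 < w y := hc.trans_le (hw y)
  have hL : 0 ≤ L := (abs_nonneg _).trans hℓu
  have hnum := abs_sub_mul_le_of_abs_le lam hℓℓ hℓu
  rw [debiasedLoss_eq r hw0.ne']
  calc |r * ((ℓℓ x y - lam * ℓu x) / w y) + lam * ℓu x|
        ≤ |r * ((ℓℓ x y - lam * ℓu x) / w y)| + |lam * ℓu x| := abs_add_le _ _
    _ = |r| * (|ℓℓ x y - lam * ℓu x| / w y) + |lam| * |ℓu x| := by
          rw [abs_mul, abs_div, abs_of_pos hw0, abs_mul]
    _ ≤ 1 * ((1 + |lam|) * L / c) + |lam| * L := by gcongr; exact hw y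
    _ = (1 + |lam|) * L / c + |lam| * L := by ring

theorem abs_debiasedLoss_sub_le [Fintype C] {w w' : C → ℝ} (hc : 0 < c) (hw : ∀ k, c ≤ w k)
    (hw' : ∀ k, c ≤ w' k) (hr : |r| ≤ 1) (hℓℓ : |ℓℓ x y| ≤ L) (hℓu : |ℓu x| ≤ L) :
    |debiasedLoss ℓℓ ℓu lam w x y r - debiasedLoss ℓℓ ℓu lam w' x y r|
      ≤ (1 + |lam|) * L / c ^ 2 * dist w w' := by
  have hnum := abs_sub_mul_le_of_abs_le lam hℓℓ hℓu
  have hinv : |(w y)⁻¹ - (w' y)⁻¹| ≤ dist w w' / c ^ 2 :=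
    (abs_inv_sub_inv_le_of_le hc (hw y) (hw' y)).trans
      (by gcongr; exact dist_le_pi_dist w w' y)
  rw [debiasedLoss_eq r (hc.trans_le (hw y)).ne', debiasedLoss_eq r (hc.trans_le (hw' y)).ne']
  calc |r * ((ℓℓ x y - lam * ℓu x) / w y) + lam * ℓu x
        - (r * ((ℓℓ x y - lam * ℓu x) / w' y) + lam * ℓu x)|
        = |r| * (|ℓℓ x y - lam * ℓu x| * |(w y)⁻¹ - (w' y)⁻¹|) := by
          rw [← abs_mul, ← abs_mul]; ring_nf
    _ ≤ 1 * ((1 + |lam|) * L * (dist w w' / c ^ 2)) := by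
          gcongr; exact (abs_nonneg _).trans hnum
    _ = (1 + |lam|) * L / c ^ 2 * dist w w' := by ring

theorem integrable_debiasedLoss {Ω : Type*} [MeasurableSpace Ω] [MeasurableSpace 𝒳]
    [MeasurableSpace C] [Finite C] [MeasurableSingletonClass C] {μ : Measure Ω}
    [IsFiniteMeasure μ] {X : Ω → 𝒳} {Y : Ω → C} {R : Ω → ℝ}
    (hXYR : Measurable fun ω => (X ω, Y ω, R ω)) (hR1 : ∀ ω, |R ω| ≤ 1) {w : C → ℝ}
    (hc : 0 < c) (hw : ∀ k, c ≤ w k) (hℓℓ : Measurable fun p : 𝒳 × C => ℓℓ p.1 p.2)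
    (hℓu : Measurable ℓu) (hLℓ : ∀ x k, |ℓℓ x k| ≤ L) (hLu : ∀ x, |ℓu x| ≤ L) :
    Integrable (fun ω => debiasedLoss ℓℓ ℓu lam w (X ω) (Y ω) (R ω)) μ :=
  .of_bound ((measurable_debiasedLoss hℓℓ hℓu w).comp hXYR).aestronglyMeasurable _
    (ae_of_all _ fun ω => abs_debiasedLoss_le hc hw (hR1 ω) (hLℓ _ _) (hLu _))

end DebiasedLoss

theorem integral_debiasedLoss_eq {Ω 𝒳 C : Type*} [MeasurableSpace Ω] [StandardBorelSpace Ω]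
    [MeasurableSpace 𝒳] [Fintype C] [MeasurableSpace C] [MeasurableSingletonClass C]
    {μ : Measure Ω} [IsFiniteMeasure μ] {X : Ω → 𝒳} {Y : Ω → C} {R : Ω → ℝ}
    (hX : Measurable X) (hY : Measurable Y) (hR : Measurable R) (hR1 : ∀ ω, |R ω| ≤ 1)
    (hRX : CondIndepFun (MeasurableSpace.comap Y inferInstance) hY.comap_le R X μ)
    {φ : C → ℝ} {c : ℝ} (hc : 0 < c) (hφc : ∀ k, c ≤ φ k)
    (hφ : μ[R | MeasurableSpace.comap Y inferInstance] =ᵐ[μ] fun ω => φ (Y ω))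
    {ℓℓ : 𝒳 → C → ℝ} {ℓu : 𝒳 → ℝ} (hℓℓ : Measurable fun p : 𝒳 × C => ℓℓ p.1 p.2)
    (hℓu : Measurable ℓu) {L : ℝ} (hLℓ : ∀ x k, |ℓℓ x k| ≤ L) (hLu : ∀ x, |ℓu x| ≤ L)
    (lam : ℝ) :
    ∫ ω, debiasedLoss ℓℓ ℓu lam φ (X ω) (Y ω) (R ω) ∂μ = ∫ ω, ℓℓ (X ω) (Y ω) ∂μ := by
  set G : 𝒳 → C → ℝ := fun x y => (ℓℓ x y - lam * ℓu x) / φ y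
  have hφ0 : ∀ k, φ k ≠ 0 := fun k => (hc.trans_le (hφc k)).ne'
  have hloss : ∀ ω, debiasedLoss ℓℓ ℓu lam φ (X ω) (Y ω) (R ω)
      = R ω * G (X ω) (Y ω) + lam * ℓu (X ω) := fun ω => debiasedLoss_eq _ (hφ0 _)
  have hφG : ∀ x y, φ y * G x y = ℓℓ x y - lam * ℓu x := fun x y => mul_div_cancel₀ _ (hφ0 y)
  have hG : Measurable fun p : 𝒳 × C => G p.1 p.2 :=
    (hℓℓ.sub (measurable_const.mul (hℓu.comp measurable_fst))).div
      ((measurable_of_finite φ).comp measurable_snd)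
  have hℓuX : Integrable (fun ω => lam * ℓu (X ω)) μ :=
    .of_bound (measurable_const.mul (hℓu.comp hX)).aestronglyMeasurable (|lam| * L)
      (ae_of_all _ fun ω => by rw [Real.norm_eq_abs, abs_mul]; gcongr; exact hLu _)
  have hℓℓXY : Integrable (fun ω => ℓℓ (X ω) (Y ω)) μ :=
    .of_bound (hℓℓ.comp (hX.prodMk hY)).aestronglyMeasurable L (ae_of_all _ fun ω => hLℓ _ _)
  have hRG : Integrable (fun ω => R ω * G (X ω) (Y ω)) μ :=
    ((integrable_debiasedLoss (lam := lam) (hX.prodMk (hY.prodMk hR)) hR1 hc hφc hℓℓ hℓu hLℓ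
      hLu).sub hℓuX).congr (ae_of_all _ fun ω => by simp only [Pi.sub_apply, hloss]; ring)
  have hRint : Integrable R μ :=
    .of_bound hR.aestronglyMeasurable 1 (ae_of_all _ hR1)
  calc ∫ ω, debiasedLoss ℓℓ ℓu lam φ (X ω) (Y ω) (R ω) ∂μ
        = ∫ ω, R ω * G (X ω) (Y ω) ∂μ + ∫ ω, lam * ℓu (X ω) ∂μ := by
          simp only [hloss]; exact integral_add hRG hℓuX
    _ = ∫ ω, (ℓℓ (X ω) (Y ω) - lam * ℓu (X ω)) ∂μ + ∫ ω, lam * ℓu (X ω) ∂μ := by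
          rw [integral_mul_eq_of_condIndepFun hY hX hR hRint hRX hφ hG hRG]
          · simp only [hφG]
          · simp only [hφG]; exact hℓℓXY.sub hℓuX
    _ = ∫ ω, ℓℓ (X ω) (Y ω) ∂μ := by rw [integral_sub hℓℓXY hℓuX, sub_add_cancel]

theorem plugin_debiased_ssl_risk_consistent_general
    {Ω : Type*} [MeasurableSpace Ω] [StandardBorelSpace Ω]
    {𝒳 : Type*} [MeasurableSpace 𝒳]
    {C : Type*} [Fintype C] [MeasurableSpace C] [MeasurableSingletonClass C]
    (μ : Measure Ω) [IsProbabilityMeasure μ]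
    (Xs : ℕ → Ω → 𝒳) (Ys : ℕ → Ω → C) (Rs : ℕ → Ω → ℝ)
    (hmeas : ∀ i, Measurable fun ω => (Xs i ω, Ys i ω, Rs i ω))
    (hY0 : Measurable (Ys 0))
    (hindep : iIndepFun
      (fun i ω => (Xs i ω, Ys i ω, Rs i ω)) μ)
    (hident : ∀ i, IdentDistrib (fun ω => (Xs i ω, Ys i ω, Rs i ω))
      (fun ω => (Xs 0 ω, Ys 0 ω, Rs 0 ω)) μ μ)
    (hR01 : ∀ i ω, Rs i ω = 0 ∨ Rs i ω = 1)
    (hCI : CondIndepFun (MeasurableSpace.comap (Ys 0) inferInstance) hY0.comap_le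
      (Rs 0) (Xs 0) μ)
    (φ : C → ℝ) (c : ℝ) (hc : 0 < c)
    (hφ_lb : ∀ k, c ≤ φ k)
    (hmech : μ[Rs 0 | MeasurableSpace.comap (Ys 0) inferInstance]
      =ᵐ[μ] fun ω => φ (Ys 0 ω))
    (ℓℓ : 𝒳 → C → ℝ) (hℓℓ : Measurable fun p : 𝒳 × C => ℓℓ p.1 p.2)
    (ℓu : 𝒳 → ℝ) (hℓu : Measurable ℓu)
    (L : ℝ) (hLℓ : ∀ x k, |ℓℓ x k| ≤ L) (hLu : ∀ x, |ℓu x| ≤ L)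
    (lam : ℝ)
    (phihat : ℕ → C → Ω → ℝ)
    (hphihat_lb : ∀ n k ω, c ≤ phihat n k ω)
    (hphihat_tendsto : ∀ k : C,
      TendstoInMeasure μ (fun n => phihat n k) atTop (fun _ => φ k)) :
    TendstoInMeasure μ
      (fun (n : ℕ) ω => (1 / (n : ℝ)) *
        ∑ i ∈ Finset.range n,
          (Rs i ω * ℓℓ (Xs i ω) (Ys i ω) / phihat n (Ys i ω) ω
            - lam * (Rs i ω - phihat n (Ys i ω) ω) * ℓu (Xs i ω)
                / phihat n (Ys i ω) ω))
      atTop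
      (fun _ => ∫ ω, ℓℓ (Xs 0 ω) (Ys 0 ω) ∂μ) := by
  have hR1 : ∀ i ω, |Rs i ω| ≤ 1 := fun i ω => by rcases hR01 i ω with h | h <;> simp [h]
  have hX0 : Measurable (Xs 0) := (hmeas 0).fst
  have hR0 : Measurable (Rs 0) := (hmeas 0).snd.snd
  have hF := measurable_debiasedLoss (lam := lam) hℓℓ hℓu φ
  set Z : ℕ → Ω → ℝ := fun i ω => debiasedLoss ℓℓ ℓu lam φ (Xs i ω) (Ys i ω) (Rs i ω)
  have horacle : TendstoInMeasure μ (fun n ω => (∑ i ∈ Finset.range n, Z i ω) / n) atTop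
      (fun _ => ∫ ω, ℓℓ (Xs 0 ω) (Ys 0 ω) ∂μ) := by
    rw [← integral_debiasedLoss_eq hX0 hY0 hR0 (hR1 0) hCI hc hφ_lb hmech hℓℓ hℓu hLℓ hLu lam]
    refine tendstoInMeasure_of_tendsto_ae (fun n => ?_) (strong_law_ae_real Z
      (integrable_debiasedLoss (hmeas 0) (hR1 0) hc hφ_lb hℓℓ hℓu hLℓ hLu)
      (fun i j hij => (hindep.indepFun hij).comp hF hF) fun i => (hident i).comp hF)
    exact ((Finset.measurable_sum _ fun i _ => hF.comp (hmeas i)).div_const _).aestronglyMeasurable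
  have hgap : TendstoInMeasure μ (fun (n : ℕ) ω => (1 / (n : ℝ)) * ∑ i ∈ Finset.range n,
        debiasedLoss ℓℓ ℓu lam (fun k => phihat n k ω) (Xs i ω) (Ys i ω) (Rs i ω)
      - (∑ i ∈ Finset.range n, Z i ω) / n) atTop (fun _ => 0) := by
    refine (tendstoInMeasure_pi (f := fun n ω k => phihat n k ω) hphihat_tendsto).of_dist_le_mul
      ((1 + |lam|) * L / c ^ 2) fun n ω => ?_
    rw [Real.dist_eq, sub_zero, one_div_mul_eq_div]
    exact abs_sum_range_div_sub_sum_range_div_le (fun i => abs_debiasedLoss_sub_le hc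
      (hphihat_lb n · ω) hφ_lb (hR1 i ω) (hLℓ _ _) (hLu _)) n
  simpa only [debiasedLoss, add_sub_cancel, add_zero] using horacle.add hgap

/-- **Consistency of the plug-in debiased SSL risk estimator.**
Let `(Xᵢ, Yᵢ, Rᵢ)` be i.i.d. copies of `(X, Y, R)` with `Y` in a finite label set,
`R ∈ {0,1}`, `R ⟂ X | Y`, and `E[R|Y] = φ(Y)` a.s. with `c ≤ φ(k) ≤ 1`, `c > 0`.
For bounded measurable losses `|ℓℓ| ≤ L`, `|ℓu| ≤ L`, any `λ ∈ ℝ`, and any estimators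
`φ̂ⁿ ≥ c` converging in probability to `φ(k)` for each class `k`, the plug-in debiased SSL
empirical risk `n⁻¹ ∑ᵢ [Rᵢ ℓℓ(Xᵢ,Yᵢ)/φ̂ⁿ(Yᵢ) − λ (Rᵢ − φ̂ⁿ(Yᵢ)) ℓu(Xᵢ)/φ̂ⁿ(Yᵢ)]`
converges in probability to `E[ℓℓ(X,Y)]`. -/
theorem plugin_debiased_ssl_risk_consistent
    {Ω : Type*} [MeasurableSpace Ω] [StandardBorelSpace Ω]
    {𝒳 : Type*} [MeasurableSpace 𝒳]
    {C : Type*} [Fintype C] [MeasurableSpace C] [MeasurableSingletonClass C]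
    (μ : Measure Ω) [IsProbabilityMeasure μ]
    (Xs : ℕ → Ω → 𝒳) (Ys : ℕ → Ω → C) (Rs : ℕ → Ω → ℝ)
    (hmeas : ∀ i, Measurable fun ω => (Xs i ω, Ys i ω, Rs i ω))
    (hY0 : Measurable (Ys 0))
    (hindep : iIndepFun
      (fun i ω => (Xs i ω, Ys i ω, Rs i ω)) μ)
    (hident : ∀ i, IdentDistrib (fun ω => (Xs i ω, Ys i ω, Rs i ω))
      (fun ω => (Xs 0 ω, Ys 0 ω, Rs 0 ω)) μ μ)
    (hR01 : ∀ i ω, Rs i ω = 0 ∨ Rs i ω = 1)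
    (hCI : CondIndepFun (MeasurableSpace.comap (Ys 0) inferInstance) hY0.comap_le
      (Rs 0) (Xs 0) μ)
    (φ : C → ℝ) (c : ℝ) (hc : 0 < c)
    (hφ_lb : ∀ k, c ≤ φ k) (hφ_ub : ∀ k, φ k ≤ 1)
    (hmech : μ[Rs 0 | MeasurableSpace.comap (Ys 0) inferInstance]
      =ᵐ[μ] fun ω => φ (Ys 0 ω))
    (ℓℓ : 𝒳 → C → ℝ) (hℓℓ : Measurable fun p : 𝒳 × C => ℓℓ p.1 p.2)
    (ℓu : 𝒳 → ℝ) (hℓu : Measurable ℓu)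
    (L : ℝ) (hLℓ : ∀ x k, |ℓℓ x k| ≤ L) (hLu : ∀ x, |ℓu x| ≤ L)
    (lam : ℝ)
    (phihat : ℕ → C → Ω → ℝ)
    (hphihat_meas : ∀ n k, Measurable (phihat n k))
    (hphihat_lb : ∀ n k ω, c ≤ phihat n k ω)
    (hphihat_tendsto : ∀ k : C,
      TendstoInMeasure μ (fun n => phihat n k) atTop (fun _ => φ k)) :
    TendstoInMeasure μ
      (fun (n : ℕ) ω => (1 / (n : ℝ)) *
        ∑ i ∈ Finset.range n,
          (Rs i ω * ℓℓ (Xs i ω) (Ys i ω) / phihat n (Ys i ω) ω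
            - lam * (Rs i ω - phihat n (Ys i ω) ω) * ℓu (Xs i ω)
                / phihat n (Ys i ω) ω))
      atTop
      (fun _ => ∫ ω, ℓℓ (Xs 0 ω) (Ys 0 ω) ∂μ) :=
  plugin_debiased_ssl_risk_consistent_general μ Xs Ys Rs hmeas hY0 hindep hident hR01 hCI φ c hc
    hφ_lb hmech ℓℓ hℓℓ ℓu hℓu L hLℓ hLu lam phihat hphihat_lb hphihat_tendsto
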